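/- arXiv:1511.09192 — 3 statements merged into one kernel-verified Lean document; each statement's English description precedes it below -/
import Mathlib

section
/- Let d be an odd prime and q = p^r a prime power with p an odd prime, p ≠ d and q ≢ 1 (mod d). Let λ ∈ F_q with λ ≠ 0. Then q(q-1)·#X_λ^d(F_q) = q^d − 1 + Σ_{a=0}^{q-2} g(T^{-a})^d · g(T^{da}) · T^{-da}(−dλ), where #X_λ^d(F_q) is the number of projective points of the Dwork hypersurface over F_q. -/
/-- The number of points of the Dwork hypersurface
`x₁^d + ⋯ + x_d^d = d·λ·x₁⋯x_d` in `ℙ^{d-1}(F)`: equivalence classes of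
nonzero solutions, two solutions being identified iff they differ by a
nonzero scalar. -/
noncomputable def dworkProjCount (F : Type) [Field F] [Fintype F] (d : ℕ) (lam : F) : ℕ :=
  Nat.card (Quot (fun x y : {v : Fin d → F // v ≠ 0 ∧
      ∑ i, v i ^ d = (d : F) * lam * ∏ i, v i} =>
    ∃ c : Fˣ, (fun i => (c : F) * x.1 i) = y.1))

/-!
Counting zeros with an additive character, `q · #{v | g v = 0} = ∑ₜ ∑ᵥ θ (t · g v)` for
`g v = ∑ vᵢ ^ d - dλ ∏ vᵢ`; the term `t = 0` is `q ^ d`. For `t ≠ 0` the summand factors as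
`∏ θ (t vᵢ ^ d) · θ (-dλ t ∏ vᵢ)`, and the last factor is expanded in the Gauss sums of `T ^ d`,
which generates the characters because `gcd (d, q - 1) = 1`. As `x ↦ x ^ d` permutes `F`, each
coordinate sum becomes the twisted Gauss sum `T ^ a (t) · g(T⁻ᵃ)`, whose `d`-th power cancels the
character of `t`; the vectors with a zero coordinate contribute `1` since `d` is odd. Finally `Fˣ`
acts freely on the nonzero solutions, so they number `(q - 1) · #X_λ(F)`.
-/

open Finset

theorem AddChar.map_sum_eq_prod {A M ι : Type*} [AddCommMonoid A] [CommMonoid M]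
    (ψ : AddChar A M) (s : Finset ι) (f : ι → A) : ψ (∑ i ∈ s, f i) = ∏ i ∈ s, ψ (f i) := by
  classical
  induction s using Finset.induction with
  | empty => simp
  | insert i s hi ih => rw [sum_insert hi, prod_insert hi, map_add_eq_mul, ih]

theorem card_sub_one_mul_card_quot_units_smul {F V : Type*} [Field F] [Fintype F] [AddCommGroup V]
    [Module F V] (P : V → Prop) (hP : ∀ (c : Fˣ) v, P v → P (c • v)) (h0 : ¬ P 0) :
    (Fintype.card F - 1) * Nat.card (Quot fun x y : {v // P v} => ∃ c : Fˣ, c • x.1 = y.1) =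
      Nat.card {v // P v} := by
  classical
  let S : SubMulAction Fˣ V := ⟨{v | P v}, fun c v hv => hP c v hv⟩
  have hfree : ∀ x : S, MulAction.stabilizer Fˣ x = ⊥ := by
    rintro ⟨x, hx⟩
    refine Subgroup.eq_bot_iff_forall _ |>.mpr fun c hc => Units.ext ?_
    have hx0 : x ≠ 0 := by rintro rfl; exact h0 hx
    refine smul_left_injective F hx0 ?_
    simpa [Units.smul_def] using congrArg Subtype.val hc
  have horbit : Quot (fun x y : S => ∃ c : Fˣ, c • x.1 = y.1) ≃
      Quotient (MulAction.orbitRel Fˣ S) := Quot.congrRight fun x y => by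
    rw [MulAction.orbitRel_apply, MulAction.mem_orbit_symm]
    exact exists_congr fun c => by simp [Subtype.ext_iff]
  rw [← Fintype.card_units, ← Nat.card_eq_fintype_card, mul_comm, ← Nat.card_prod]
  exact Nat.card_congr ((horbit.prodCongr (Equiv.refl _)).trans
    (MulAction.selfEquivOrbitsQuotientProd hfree).symm)

theorem card_sub_one_mul_dworkProjCount (F : Type) [Field F] [Fintype F] {d : ℕ} (lam : F) :
    (Fintype.card F - 1) * dworkProjCount F d lam =
      Nat.card {v : Fin d → F // v ≠ 0 ∧ ∑ i, v i ^ d = (d : F) * lam * ∏ i, v i} := by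
  refine card_sub_one_mul_card_quot_units_smul _ (fun c v ⟨hv, hveq⟩ => ⟨?_, ?_⟩) (fun h => h.1 rfl)
  · exact (smul_ne_zero_iff_ne c).mpr hv
  · simp only [Pi.smul_apply, Units.smul_def, smul_eq_mul, mul_pow, ← mul_sum, prod_mul_distrib,
      prod_const, card_univ, Fintype.card_fin, hveq]
    ring

section FiniteField
variable {F : Type*} [Field F] [Fintype F]

theorem pow_bijective_of_coprime {d : ℕ} (hd : d ≠ 0) (h : (Fintype.card F - 1).Coprime d) :
    Function.Bijective fun x : F => x ^ d := by
  classical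
  refine Finite.injective_iff_bijective.mp fun x y hxy => ?_
  rcases eq_or_ne x 0 with rfl | hx
  · rw [zero_pow hd, eq_comm, pow_eq_zero_iff hd] at hxy
    exact hxy.symm
  have hy : y ≠ 0 := by rintro rfl; rw [zero_pow hd] at hxy; exact pow_ne_zero d hx hxy
  have hcop : (Nat.card Fˣ).Coprime d := by rwa [Nat.card_eq_fintype_card, Fintype.card_units]
  have hunits := (powCoprime hcop).injective (a₁ := Units.mk0 x hx) (a₂ := Units.mk0 y hy)
    (Units.ext (by simpa using hxy))
  simpa using congrArg Units.val hunits

theorem MulChar.eq_one_of_apply_eq_one {T : MulChar F ℂ}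
    (hT : ∀ χ : MulChar F ℂ, ∃ n : ℕ, χ = T ^ n) {z : F} (hz : T z = 1) : z = 1 := by
  by_contra hz1
  obtain ⟨χ, hχ⟩ := exists_apply_ne_one_of_hasEnoughRootsOfUnity F ℂ hz1
  obtain ⟨n, rfl⟩ := hT χ
  by_cases hz0 : z = 0
  · simp [hz0] at hz
  · exact hχ (by simpa [hz] using pow_apply_coe T n (Units.mk0 z hz0))

theorem sum_pow_inv_apply_mul_addChar {d : ℕ} (hd : d ≠ 0)
    (hpow : Function.Bijective fun x : F => x ^ d) (ψ : MulChar F ℂ) (θ : AddChar F ℂ) {t : F}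
    (ht : t ≠ 0) :
    ∑ x, (ψ ^ d)⁻¹ x * θ (t * x ^ d) = ψ t * gaussSum ψ⁻¹ θ := by
  have hshift := gaussSum_mulShift_eq ψ⁻¹ θ (Units.mk0 t ht)
  rw [inv_inv, Units.val_mk0] at hshift
  rw [← hshift, gaussSum]
  refine Eq.trans ?_ (hpow.sum_comp fun y => ψ⁻¹ y * θ.mulShift t y)
  simp_rw [← inv_pow, MulChar.pow_apply' _ hd, ← map_pow, AddChar.mulShift_apply]

theorem sum_prod_addChar_mul_inv_pow_apply {d : ℕ} (hd : d ≠ 0)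
    (hpow : Function.Bijective fun x : F => x ^ d) (ψ : MulChar F ℂ) (θ : AddChar F ℂ)
    (c : F) {t : F} (ht : t ≠ 0) :
    ∑ v : Fin d → F, (∏ i, θ (t * v i ^ d)) * (ψ ^ d)⁻¹ (c * t * ∏ i, v i) =
      gaussSum ψ⁻¹ θ ^ d * (ψ ^ d)⁻¹ c := by
  have hcancel : ψ t ^ d * (ψ ^ d)⁻¹ t = 1 := by
    rw [MulChar.inv_apply', ← MulChar.pow_apply' _ hd, ← map_mul, mul_inv_cancel₀ ht, map_one]
  calc _ = (ψ ^ d)⁻¹ c * (ψ ^ d)⁻¹ t *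
        ∑ v : Fin d → F, ∏ i, (ψ ^ d)⁻¹ (v i) * θ (t * v i ^ d) := by
        rw [mul_sum]
        refine sum_congr rfl fun v _ => ?_
        rw [map_mul, map_mul, map_prod, prod_mul_distrib]
        ring
    _ = (ψ ^ d)⁻¹ c * (ψ ^ d)⁻¹ t * (ψ t * gaussSum ψ⁻¹ θ) ^ d := by
        rw [← Fintype.sum_pow fun x => (ψ ^ d)⁻¹ x * θ (t * x ^ d),
          sum_pow_inv_apply_mul_addChar hd hpow ψ θ ht]
    _ = _ := by linear_combination gaussSum ψ⁻¹ θ ^ d * (ψ ^ d)⁻¹ c * hcancel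

theorem sum_addChar_mul_pow_eq_zero {d : ℕ} (hpow : Function.Bijective fun x : F => x ^ d)
    {θ : AddChar F ℂ} (hθ : θ ≠ 1) {t : F} (ht : t ≠ 0) : ∑ x, θ (t * x ^ d) = 0 := by
  rw [hpow.sum_comp fun y => θ (t * y)]
  exact AddChar.sum_eq_zero_of_ne_one (AddChar.IsPrimitive.of_ne_one hθ ht)

variable [DecidableEq F]

theorem MulChar.sum_pow_apply {χ : MulChar F ℂ} (hχ : ∀ z, χ z = 1 → z = 1) (z : F) :
    ∑ a ∈ range (Fintype.card F - 1), (χ ^ a) z =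
      if z = 1 then ((Fintype.card F - 1 : ℕ) : ℂ) else 0 := by
  rcases eq_or_ne z 0 with rfl | hz
  · simp
  have hpow : ∀ a, (χ ^ a) z = χ z ^ a := fun a => pow_apply_coe χ a (Units.mk0 z hz)
  simp_rw [hpow]
  split_ifs with h1
  · simp [h1]
  · rw [geom_sum_eq (fun h => h1 (hχ z h)), ← map_pow, FiniteField.pow_card_sub_one_eq_one z hz,
      map_one, sub_self, zero_div]

theorem sum_gaussSum_pow_mul_inv_apply {χ : MulChar F ℂ} (hχ : ∀ z, χ z = 1 → z = 1)
    (θ : AddChar F ℂ) (u : F) :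
    ∑ a ∈ range (Fintype.card F - 1), gaussSum (χ ^ a) θ * (χ ^ a)⁻¹ u =
      if u = 0 then 0 else ((Fintype.card F - 1 : ℕ) : ℂ) * θ u := by
  split_ifs with hu
  · simp [hu, MulChar.map_zero]
  calc ∑ a ∈ range (Fintype.card F - 1), gaussSum (χ ^ a) θ * (χ ^ a)⁻¹ u
      = ∑ x, θ x * ∑ a ∈ range (Fintype.card F - 1), (χ ^ a) (x * u⁻¹) := by
        simp_rw [MulChar.inv_apply', gaussSum, sum_mul, mul_sum, map_mul]
        rw [sum_comm]
        exact sum_congr rfl fun x _ => sum_congr rfl fun a _ => by ring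
    _ = ((Fintype.card F - 1 : ℕ) : ℂ) * θ u := by
        simp_rw [MulChar.sum_pow_apply hχ, mul_inv_eq_one₀ hu, mul_ite, mul_zero, sum_ite_eq',
          mem_univ, if_true, mul_comm]

theorem sum_ite_prod_eq_zero_eq_one {d : ℕ} (hd : Odd d) {f : F → ℂ} (hf0 : f 0 = 1)
    (hf : ∑ x, f x = 0) :
    ∑ v : Fin d → F, (if ∏ i, v i = 0 then ∏ i, f (v i) else 0) = 1 := by
  have hsplit : ∀ v : Fin d → F, (if ∏ i, v i = 0 then ∏ i, f (v i) else 0) =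
      ∏ i, f (v i) - ∏ i, (if v i ≠ 0 then f (v i) else 0) := by
    intro v
    simp only [prod_ite_zero, prod_eq_zero_iff, mem_univ, true_and, forall_const]
    by_cases h : ∃ i, v i = 0
    · rw [if_pos h, if_neg (not_forall_not.mpr h), sub_zero]
    · rw [if_neg h, if_pos (not_exists.mp h), sub_self]
  have hunits : ∑ x, (if x ≠ 0 then f x else 0) = -1 := by
    rw [← sum_filter, filter_ne', ← add_sum_erase _ _ (mem_univ 0), hf0] at *
    linear_combination hf
  rw [sum_congr rfl fun v _ => hsplit v, sum_sub_distrib, ← Fintype.sum_pow,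
    ← Fintype.sum_pow fun x => if x ≠ 0 then f x else 0,
    hf, hunits, zero_pow hd.pos.ne', hd.neg_one_pow, zero_sub, neg_neg]

theorem sum_sum_addChar_mul_eq_card_mul {ι : Type*} [Fintype ι] {θ : AddChar F ℂ} (hθ : θ ≠ 1)
    (g : ι → F) :
    ∑ i, ∑ t, θ (t * g i) = Fintype.card F * #{i | g i = 0} := by
  simp_rw [AddChar.sum_mulShift _ (AddChar.IsPrimitive.of_ne_one hθ)]
  rw [← Nat.cast_sum, ← sum_filter, sum_const, smul_eq_mul, Nat.cast_mul, mul_comm]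

end FiniteField

theorem card_sub_one_mul_sum_addChar_dwork {F : Type*} [Field F] [Fintype F] [DecidableEq F]
    {d : ℕ} (hd : Odd d) (hpow : Function.Bijective fun x : F => x ^ d) {θ : AddChar F ℂ}
    (hθ : θ ≠ 1) {T : MulChar F ℂ} (hT : ∀ z, (T ^ d) z = 1 → z = 1) {c t : F} (hc : c ≠ 0)
    (ht : t ≠ 0) :
    ((Fintype.card F - 1 : ℕ) : ℂ) * ∑ v : Fin d → F, θ (t * (∑ i, v i ^ d + c * ∏ i, v i)) =
      ((Fintype.card F - 1 : ℕ) : ℂ) + ∑ a ∈ range (Fintype.card F - 1),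
        gaussSum ((T ^ a)⁻¹) θ ^ d * gaussSum (T ^ (d * a)) θ * ((T ^ (d * a))⁻¹) c := by
  set n : ℂ := ((Fintype.card F - 1 : ℕ) : ℂ)
  have hpoint : ∀ v : Fin d → F, n * θ (t * (∑ i, v i ^ d + c * ∏ i, v i)) =
      n * (if ∏ i, v i = 0 then ∏ i, θ (t * v i ^ d) else 0) +
        ∑ a ∈ range (Fintype.card F - 1), gaussSum (T ^ (d * a)) θ *
          ((∏ i, θ (t * v i ^ d)) * (T ^ (d * a))⁻¹ (c * t * ∏ i, v i)) := by
    intro v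
    have hfactor : θ (t * (∑ i, v i ^ d + c * ∏ i, v i)) =
        (∏ i, θ (t * v i ^ d)) * θ (c * t * ∏ i, v i) := by
      rw [mul_add, mul_sum, AddChar.map_add_eq_mul, AddChar.map_sum_eq_prod, mul_left_comm t c,
        ← mul_assoc]
    have hfourier := sum_gaussSum_pow_mul_inv_apply hT θ (c * t * ∏ i, v i)
    simp_rw [← pow_mul] at hfourier
    simp_rw [hfactor, mul_left_comm (gaussSum _ θ), ← mul_sum, hfourier]
    by_cases h : ∏ i, v i = 0
    · simp [h]
    · simp [h, hc, ht]
      ring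
  have hzero_coord := sum_ite_prod_eq_zero_eq_one hd (by simp [hd.pos.ne'])
    (sum_addChar_mul_pow_eq_zero hpow hθ ht)
  rw [mul_sum, sum_congr rfl fun v _ => hpoint v, sum_add_distrib, ← mul_sum, sum_comm,
    hzero_coord, mul_one]
  congr 1
  refine sum_congr rfl fun a _ => ?_
  rw [← mul_sum, pow_mul', sum_prod_addChar_mul_inv_pow_apply hd.pos.ne' hpow (T ^ a) θ c ht]
  ring

theorem card_filter_dwork_eq_zero {F : Type*} [Field F] [Fintype F] [DecidableEq F] {d : ℕ}
    (hd : d ≠ 0) (lam : F) :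
    #{v : Fin d → F | ∑ i, v i ^ d + -(d : F) * lam * ∏ i, v i = 0} =
      Nat.card {v : Fin d → F // v ≠ 0 ∧ ∑ i, v i ^ d = (d : F) * lam * ∏ i, v i} + 1 := by
  rw [Nat.card_eq_fintype_card, Fintype.card_subtype, ← card_insert_of_notMem (a := 0) (by simp)]
  congr 1
  ext v
  by_cases hv : v = 0
  · simp [hv, hd]
  · simp [hv, neg_mul, ← sub_eq_add_neg, sub_eq_zero]

theorem card_mul_card_dworkSolutions {F : Type*} [Field F] [Fintype F] [DecidableEq F] {d : ℕ}
    (hd : Odd d) (hpow : Function.Bijective fun x : F => x ^ d) {lam : F}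
    (hlam : (d : F) * lam ≠ 0) {θ : AddChar F ℂ} (hθ : θ ≠ 1) {T : MulChar F ℂ}
    (hT : ∀ z, (T ^ d) z = 1 → z = 1) :
    (Fintype.card F : ℂ) *
        Nat.card {v : Fin d → F // v ≠ 0 ∧ ∑ i, v i ^ d = (d : F) * lam * ∏ i, v i} =
      (Fintype.card F : ℂ) ^ d - 1 + ∑ a ∈ range (Fintype.card F - 1),
        gaussSum ((T ^ a)⁻¹) θ ^ d * gaussSum (T ^ (d * a)) θ *
          ((T ^ (d * a))⁻¹) (-(d : F) * lam) := by
  set q := Fintype.card F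
  set B := ∑ a ∈ range (q - 1), gaussSum ((T ^ a)⁻¹) θ ^ d * gaussSum (T ^ (d * a)) θ *
    ((T ^ (d * a))⁻¹) (-(d : F) * lam)
  set g : (Fin d → F) → F := fun v => ∑ i, v i ^ d + -(d : F) * lam * ∏ i, v i
  have hzeros : #{v | g v = 0} = _ := card_filter_dwork_eq_zero hd.pos.ne' lam
  have hq1 : ((q - 1 : ℕ) : ℂ) = q - 1 := Nat.cast_pred Fintype.card_pos
  have hq1ne : (q : ℂ) - 1 ≠ 0 := by
    rw [← hq1, Nat.cast_ne_zero]
    exact (Nat.sub_pos_of_lt Fintype.one_lt_card).ne'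
  have hc : -(d : F) * lam ≠ 0 := by rw [neg_mul]; exact neg_ne_zero.mpr hlam
  have hfiber : ∀ t ∈ univ.erase (0 : F), ((q : ℂ) - 1) * ∑ v, θ (t * g v) = q - 1 + B :=
    fun t ht => by
      have h := card_sub_one_mul_sum_addChar_dwork hd hpow hθ hT hc (ne_of_mem_erase ht)
      rwa [Nat.cast_pred Fintype.card_pos] at h
  have hunits : ((q : ℂ) - 1) * ∑ t ∈ univ.erase 0, ∑ v, θ (t * g v) = (q - 1) * (q - 1 + B) := by
    rw [mul_sum, sum_congr rfl hfiber, sum_const, card_erase_of_mem (mem_univ 0), card_univ,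
      nsmul_eq_mul, hq1]
  have hsum := sum_sum_addChar_mul_eq_card_mul hθ g
  rw [sum_comm, ← add_sum_erase _ _ (mem_univ 0), hzeros] at hsum
  simp only [zero_mul, AddChar.map_zero_eq_one, sum_const, card_univ, Fintype.card_fun,
    Fintype.card_fin, nsmul_eq_mul, mul_one] at hsum
  apply mul_left_cancel₀ hq1ne
  push_cast at hsum
  linear_combination (1 - (q : ℂ)) * hsum + hunits

theorem stmt_0_general (p r d : ℕ) (hp : p.Prime) (hd : d.Prime) (hdodd : Odd d) (hpd : p ≠ d)
    (F : Type) [Field F] [Fintype F] (hq : Fintype.card F = p ^ r)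
    (hqd : ¬ p ^ r ≡ 1 [MOD d])
    (lam : F) (hlam : lam ≠ 0)
    (θ : AddChar F ℂ) (hθ : θ ≠ 1)
    (T : MulChar F ℂ) (hT : ∀ χ : MulChar F ℂ, ∃ n : ℕ, χ = T ^ n) :
    ((p ^ r * (p ^ r - 1) * dworkProjCount F d lam : ℕ) : ℂ) =
      ((p : ℂ) ^ r) ^ d - 1 +
        ∑ a ∈ Finset.range (p ^ r - 1),
          gaussSum ((T ^ a)⁻¹) θ ^ d * gaussSum (T ^ (d * a)) θ *
            ((T ^ (d * a))⁻¹) (-(d : F) * lam) := by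
  classical
  have hcop : (Fintype.card F - 1).Coprime d := by
    rw [hq, Nat.coprime_comm, hd.coprime_iff_not_dvd]
    exact fun h => hqd ((Nat.modEq_iff_dvd' (Nat.one_le_pow _ _ hp.pos)).mpr h).symm
  have hpow := pow_bijective_of_coprime hd.ne_zero hcop
  have hdF : (d : F) ≠ 0 := by
    have := Fact.mk hp
    have := charP_of_card_eq_prime_pow hq
    rw [ne_eq, CharP.cast_eq_zero_iff F p, Nat.prime_dvd_prime_iff_eq hp hd]
    exact hpd
  have hTd : ∀ z : F, (T ^ d) z = 1 → z = 1 := fun z hz => hpow.injective <| by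
    rw [one_pow]
    exact MulChar.eq_one_of_apply_eq_one hT (by rwa [map_pow, ← MulChar.pow_apply' T hd.ne_zero])
  rw [← hq, mul_assoc, card_sub_one_mul_dworkProjCount, Nat.cast_mul,
    card_mul_card_dworkSolutions hdodd hpow (mul_ne_zero hdF hlam) hθ hTd]
  rw [hq, Nat.cast_pow]

theorem stmt_0 (p r d : ℕ) (hp : p.Prime) (hpodd : Odd p) (hd : d.Prime) (hdodd : Odd d)
    (hr : 0 < r) (hpd : p ≠ d)
    (F : Type) [Field F] [Fintype F] (hq : Fintype.card F = p ^ r)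
    (hqd : ¬ p ^ r ≡ 1 [MOD d])
    (lam : F) (hlam : lam ≠ 0)
    (θ : AddChar F ℂ) (hθ : θ ≠ 1)
    (T : MulChar F ℂ) (hT : ∀ χ : MulChar F ℂ, ∃ n : ℕ, χ = T ^ n) :
    ((p ^ r * (p ^ r - 1) * dworkProjCount F d lam : ℕ) : ℂ) =
      ((p : ℂ) ^ r) ^ d - 1 +
        ∑ a ∈ Finset.range (p ^ r - 1),
          gaussSum ((T ^ a)⁻¹) θ ^ d * gaussSum (T ^ (d * a)) θ *
            ((T ^ (d * a))⁻¹) (-(d : F) * lam) :=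
  stmt_0_general p r d hp hd hdodd hpd F hq hqd lam hlam θ hθ T hT
end

section
/- Let d be an odd prime and q = p^r a prime power with p an odd prime, p ≠ d and q ≢ 1 (mod d). Let λ ∈ F_q with λ ≠ 0. Then Σ_{z∈F_q^×} Σ_{x_1,…,x_d∈F_q^×} θ(z·(x_1^d + ⋯ + x_d^d − dλ x_1⋯x_d)) = Σ_{a=0}^{q-2} g(T^{-a})^d · g(T^{da}) · T^{-da}(−dλ). -/
open Finset

theorem stmt_1 (p r d : ℕ) (hp : p.Prime) (hpodd : Odd p) (hd : d.Prime) (hdodd : Odd d)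
    (hr : 0 < r) (hpd : p ≠ d)
    (F : Type) [Field F] [Fintype F] [DecidableEq F] (hq : Fintype.card F = p ^ r)
    (hqd : ¬ p ^ r ≡ 1 [MOD d])
    (lam : F) (hlam : lam ≠ 0)
    (θ : AddChar F ℂ) (hθ : θ ≠ 1)
    (T : MulChar F ℂ) (hT : ∀ χ : MulChar F ℂ, ∃ n : ℕ, χ = T ^ n) :
    ∑ z : Fˣ, ∑ x : Fin d → Fˣ,
        θ ((z : F) * (∑ i, (x i : F) ^ d - (d : F) * lam * ∏ i, (x i : F))) =
      ∑ a ∈ Finset.range (p ^ r - 1),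
        gaussSum ((T ^ a)⁻¹) θ ^ d * gaussSum (T ^ (d * a)) θ *
          ((T ^ (d * a))⁻¹) (-(d : F) * lam) := by
  classical
  set n := p ^ r - 1 with hndef
  have hq1 : 1 < p ^ r := Nat.one_lt_pow hr.ne' hp.one_lt
  have hn0 : 0 < n := by omega
  have hcardU : Fintype.card Fˣ = n := by rw [Fintype.card_units, hq]
  -- characteristic of F is p
  have hchar0 : CharP F (ringChar F) := ringChar.charP F
  have hcharp : ringChar F = p := by
    have hdvd : ringChar F ∣ p ^ r := by
      rw [← hq]
      exact (CharP.cast_eq_zero_iff F (ringChar F) (Fintype.card F)).mp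
        (by exact_mod_cast FiniteField.cast_card_eq_zero F)
    rcases CharP.char_is_prime_or_zero F (ringChar F) with hpr | h0
    · exact (Nat.prime_dvd_prime_iff_eq hpr hp).mp (hpr.dvd_of_dvd_pow hdvd)
    · rw [h0] at hdvd
      exact absurd (zero_dvd_iff.mp hdvd) (by positivity)
  have hchar : CharP F p := hcharp ▸ hchar0
  have hdF : (d : F) ≠ 0 := by
    intro h
    exact hpd ((Nat.prime_dvd_prime_iff_eq hp hd).mp ((CharP.cast_eq_zero_iff F p d).mp h))
  set mc : F := -((d : F) * lam) with hmc
  have hmcne : mc ≠ 0 := neg_ne_zero.mpr (mul_ne_zero hdF hlam)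
  -- coprimality of d and n
  have hgcd : Nat.gcd n d = 1 := by
    have hnd : ¬ d ∣ n := by
      intro hdvd
      exact hqd (((Nat.modEq_iff_dvd' hq1.le).mpr hdvd).symm)
    exact Nat.coprime_comm.mp ((hd.coprime_iff_not_dvd).mpr hnd)
  -- injectivity of T on units
  haveI : NeZero ((Monoid.exponent Fˣ : ℂ)) :=
    ⟨Nat.cast_ne_zero.mpr Monoid.exponent_ne_zero_of_finite⟩
  have hTinj : ∀ v : Fˣ, T ((v : F)) = 1 → v = 1 := by
    intro v hv
    by_contra hv1
    have hne : ((v : F)) ≠ 1 := fun h => hv1 (Units.ext h)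
    obtain ⟨χ, hχ⟩ := MulChar.exists_apply_ne_one_of_hasEnoughRootsOfUnity F ℂ hne
    obtain ⟨m, rfl⟩ := hT χ
    exact hχ (by rw [MulChar.pow_apply_coe T m v, hv, one_pow])
  have hTn : T ^ n = 1 := by rw [← hcardU]; exact T.pow_card_eq_one
  have hT1 : ∀ m : ℕ, n ∣ m → T ^ m = 1 := by
    rintro m ⟨k, rfl⟩; rw [pow_mul, hTn, one_pow]
  have hTne : ∀ m : ℕ, ¬ n ∣ m → T ^ m ≠ 1 := by
    intro m hm heq
    obtain ⟨g, hg⟩ := IsCyclic.exists_generator (α := Fˣ)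
    have hog : orderOf g = n := by
      rw [orderOf_eq_card_of_forall_mem_zpowers hg, Nat.card_eq_fintype_card, hcardU]
    apply hm
    have h1 : (T ((g : F))) ^ m = 1 := by
      rw [← MulChar.pow_apply_coe, heq, MulChar.one_apply_coe]
    have h2 : orderOf (T ((g : F))) ∣ m := orderOf_dvd_of_pow_eq_one h1
    have h3 : n ∣ orderOf (T ((g : F))) := by
      have h4 : T (((g ^ orderOf (T ((g : F))) : Fˣ) : F)) = 1 := by
        rw [Units.val_pow_eq_pow_val, map_pow, pow_orderOf_eq_one]
      have h5 : g ^ orderOf (T ((g : F))) = 1 := hTinj _ h4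
      rw [← hog]
      exact orderOf_dvd_of_pow_eq_one h5
    exact h3.trans h2
  -- sum over units of a power of T
  have hconv : ∀ χ : MulChar F ℂ, ∑ v : Fˣ, χ ((v : F)) = ∑ x : F, χ x := by
    intro χ
    have h0 : ∑ x : F, χ x = ∑ x ∈ (univ : Finset F).erase 0, χ x :=
      (Finset.sum_erase _ (MulChar.map_nonunit χ not_isUnit_zero)).symm
    rw [h0]
    apply Finset.sum_bij (fun (v : Fˣ) _ => (v : F))
    · intro v _
      exact Finset.mem_erase.mpr ⟨v.ne_zero, Finset.mem_univ _⟩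
    · intro v _ w _ h
      exact Units.ext h
    · intro x hx
      rcases Finset.mem_erase.mp hx with ⟨hx0, _⟩
      exact ⟨(IsUnit.mk0 x hx0).unit, Finset.mem_univ _, rfl⟩
    · intro v _; rfl
  have hsumU : ∀ m : ℕ, (∑ v : Fˣ, (T ((v : F))) ^ m) = if n ∣ m then (n : ℂ) else 0 := by
    intro m
    split_ifs with h
    · have h1 : ∀ v : Fˣ, (T ((v : F))) ^ m = 1 := by
        intro v
        rw [← MulChar.pow_apply_coe, hT1 m h, MulChar.one_apply_coe]
      simp only [h1, Finset.sum_const, Finset.card_univ, hcardU, nsmul_eq_mul, mul_one]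
    · have h1 : ∀ v : Fˣ, (T ((v : F))) ^ m = (T ^ m) ((v : F)) := fun v =>
        (MulChar.pow_apply_coe T m v).symm
      simp only [h1]
      rw [hconv]
      exact MulChar.sum_eq_zero_of_ne_one (hTne m h)
  -- Fourier expansion of θ
  have hgeom : ∀ v : Fˣ, v ≠ 1 → ∑ a ∈ range n, (T ((v : F))) ^ a = 0 := by
    intro v hv
    have ht1 : T ((v : F)) ≠ 1 := fun h => hv (hTinj v h)
    have hvn : v ^ n = 1 := by rw [← hcardU]; exact pow_card_eq_one
    have htn : (T ((v : F))) ^ n = 1 := by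
      rw [← map_pow, ← Units.val_pow_eq_pow_val, hvn, Units.val_one, map_one]
    rw [geom_sum_eq ht1, htn, sub_self, zero_div]
  have hfourier : ∀ u : F, u ≠ 0 →
      (n : ℂ) * θ u = ∑ a ∈ range n, gaussSum ((T ^ a)⁻¹) θ * (T ^ a) u := by
    intro u hu
    have hgs : ∀ a : ℕ, gaussSum ((T ^ a)⁻¹) θ * (T ^ a) u
        = ∑ x : F, ((T ^ a)⁻¹) x * (T ^ a) u * θ x := by
      intro a
      rw [gaussSum, Finset.sum_mul]
      exact Finset.sum_congr rfl fun x _ => by ring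
    rw [Finset.sum_congr rfl fun a _ => hgs a, Finset.sum_comm]
    have hinner : ∀ x : F, (∑ a ∈ range n, ((T ^ a)⁻¹) x * (T ^ a) u * θ x)
        = if x = u then (n : ℂ) * θ u else 0 := by
      intro x
      by_cases hx0 : x = 0
      · subst hx0
        have : ∀ a : ℕ, ((T ^ a)⁻¹) (0 : F) = 0 :=
          fun a => MulChar.map_nonunit _ not_isUnit_zero
        simp [this, if_neg (Ne.symm hu)]
      · lift u to Fˣ using IsUnit.mk0 u hu with u' hu'
        lift x to Fˣ using IsUnit.mk0 x hx0 with x' hx'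
        have key : ∀ a : ℕ, ((T ^ a)⁻¹) ((x' : F)) * (T ^ a) ((u' : F))
            = (T (((x'⁻¹ * u' : Fˣ) : F))) ^ a := by
          intro a
          rw [MulChar.inv_apply' , ← Units.val_inv_eq_inv_val, MulChar.pow_apply_coe,
            MulChar.pow_apply_coe, ← mul_pow, ← map_mul, Units.val_mul]
        rw [Finset.sum_congr rfl fun a _ => by rw [key a], ← Finset.sum_mul]
        by_cases hxu : x' = u'
        · subst hxu
          rw [if_pos rfl, inv_mul_cancel, Units.val_one, map_one]
          simp
        · have hne1 : x'⁻¹ * u' ≠ 1 := fun h => hxu (inv_mul_eq_one.mp h)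
          rw [if_neg (fun h => hxu (Units.ext h)), hgeom _ hne1, zero_mul]
    rw [Finset.sum_congr rfl fun x _ => hinner x]
    simp
  -- definitions
  set G : ℕ → ℂ := fun a => gaussSum ((T ^ a)⁻¹) θ with hGdef
  set e : ℕ → ℂ := fun m => if n ∣ m then (n : ℂ) else 0 with hedef
  have hsumU' : ∀ m : ℕ, (∑ v : Fˣ, (T ((v : F))) ^ m) = e m := hsumU
  set b₀ : ℕ → ℕ := fun a => (n - a * d % n) % n with hbdef
  have hb₀lt : ∀ a, b₀ a < n := fun a => Nat.mod_lt _ hn0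
  have hb₀dvd : ∀ a, n ∣ a * d + b₀ a := by
    intro a
    have h1 : a * d + b₀ a ≡ a * d + (n - a * d % n) [MOD n] :=
      Nat.ModEq.add_left _ (Nat.mod_modEq _ _)
    have hle : a * d % n ≤ a * d := Nat.mod_le _ _
    have hlt : a * d % n < n := Nat.mod_lt _ hn0
    have h2 : a * d + (n - a * d % n) = (a * d - a * d % n) + n := by omega
    have h3 : n ∣ (a * d - a * d % n) + n := Nat.dvd_add (Nat.dvd_sub_mod _) dvd_rfl
    rw [← Nat.modEq_zero_iff_dvd]
    exact (h1.trans (h2 ▸ (Nat.modEq_zero_iff_dvd).mpr h3))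
  have hbuniq : ∀ a b, b < n → n ∣ a * d + b → b = b₀ a := by
    intro a b hb hdvd
    have h1 : a * d + b ≡ a * d + b₀ a [MOD n] :=
      ((Nat.modEq_zero_iff_dvd).mpr hdvd).trans ((Nat.modEq_zero_iff_dvd).mpr (hb₀dvd a)).symm
    have h2 : b ≡ b₀ a [MOD n] := Nat.ModEq.add_left_cancel' _ h1
    rwa [Nat.ModEq, Nat.mod_eq_of_lt hb, Nat.mod_eq_of_lt (hb₀lt a)] at h2
  have θsum : ∀ (s : Finset (Fin d)) (f : Fin d → F),
      θ (∑ i ∈ s, f i) = ∏ i ∈ s, θ (f i) := by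
    intro s f
    induction s using Finset.cons_induction with
    | empty => simp
    | cons a s ha ih => rw [Finset.sum_cons, Finset.prod_cons, AddChar.map_add_eq_mul, ih]
  set P : Finset ((Fin d → ℕ) × ℕ) := (Fintype.piFinset fun _ : Fin d => range n) ×ˢ range n
    with hPdef
  set W : (Fin d → ℕ) × ℕ → ℂ := fun Ab =>
    ((∏ i, G (Ab.1 i)) * (G Ab.2 * (T ^ Ab.2) mc) * ∏ i, e (Ab.1 i * d + Ab.2))
      * e ((∑ i, Ab.1 i) + Ab.2) with hWdef
  have i₀ : Fin d := ⟨0, hd.pos⟩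
  -- step 3 : inner double sum evaluates to W
  have claim3 : ∀ (A : Fin d → ℕ) (b : ℕ),
      (∑ z : Fˣ, ∑ x : Fin d → Fˣ,
        (∏ i, G (A i) * (T ^ (A i)) ((z : F) * ((x i : F)) ^ d))
          * (G b * (T ^ b) (mc * ((z : F) * ∏ i, (x i : F)))))
      = W (A, b) := by
    intro A b
    have hpt : ∀ (z : Fˣ) (x : Fin d → Fˣ),
        (∏ i, G (A i) * (T ^ (A i)) ((z : F) * ((x i : F)) ^ d))
          * (G b * (T ^ b) (mc * ((z : F) * ∏ i, (x i : F))))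
        = ((∏ i, G (A i)) * (G b * (T ^ b) mc)) *
          ((T ((z : F))) ^ ((∑ i, A i) + b) * ∏ i, (T ((x i : F))) ^ (A i * d + b)) := by
      intro z x
      have h1 : ∀ i, (T ^ (A i)) ((z : F) * ((x i : F)) ^ d)
          = (T ((z : F))) ^ (A i) * (T ((x i : F))) ^ (A i * d) := by
        intro i
        rw [map_mul, map_pow, MulChar.pow_apply_coe, MulChar.pow_apply_coe, ← pow_mul]
      have h2 : (T ^ b) (mc * ((z : F) * ∏ i, (x i : F)))
          = (T ^ b) mc * ((T ((z : F))) ^ b * ∏ i, (T ((x i : F))) ^ b) := by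
        rw [map_mul, map_mul, map_prod, MulChar.pow_apply_coe]
        simp only [MulChar.pow_apply_coe]
      have e1 : (∏ i, G (A i) * ((T ((z : F))) ^ (A i) * (T ((x i : F))) ^ (A i * d)))
          = (∏ i, G (A i)) *
            ((T ((z : F))) ^ (∑ i, A i) * ∏ i, (T ((x i : F))) ^ (A i * d)) := by
        rw [Finset.prod_mul_distrib, Finset.prod_mul_distrib, Finset.prod_pow_eq_pow_sum]
      have e2 : (∏ i, (T ((x i : F))) ^ (A i * d + b))
          = (∏ i, (T ((x i : F))) ^ (A i * d)) * ∏ i, (T ((x i : F))) ^ b := by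
        simp only [pow_add]; rw [Finset.prod_mul_distrib]
      simp only [h1, h2]
      rw [e1, e2, pow_add]
      ring
    calc ∑ z : Fˣ, ∑ x : Fin d → Fˣ,
          (∏ i, G (A i) * (T ^ (A i)) ((z : F) * ((x i : F)) ^ d))
            * (G b * (T ^ b) (mc * ((z : F) * ∏ i, (x i : F))))
        = ∑ z : Fˣ, ∑ x : Fin d → Fˣ,
            ((∏ i, G (A i)) * (G b * (T ^ b) mc)) *
              ((T ((z : F))) ^ ((∑ i, A i) + b) * ∏ i, (T ((x i : F))) ^ (A i * d + b)) :=
          Finset.sum_congr rfl fun z _ => Finset.sum_congr rfl fun x _ => hpt z x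
      _ = ∑ z : Fˣ, ((∏ i, G (A i)) * (G b * (T ^ b) mc)) *
              ((T ((z : F))) ^ ((∑ i, A i) + b) *
                ∑ x : Fin d → Fˣ, ∏ i, (T ((x i : F))) ^ (A i * d + b)) := by
          simp only [← Finset.mul_sum]
      _ = ∑ z : Fˣ, ((∏ i, G (A i)) * (G b * (T ^ b) mc)) *
              ((T ((z : F))) ^ ((∑ i, A i) + b) * ∏ i, e (A i * d + b)) := by
          refine Finset.sum_congr rfl fun z _ => ?_
          congr 2
          have hx := (Finset.prod_univ_sum (fun _ : Fin d => (univ : Finset Fˣ))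
            (fun i v => T ((v : F)) ^ (A i * d + b))).symm
          rw [← Fintype.piFinset_univ, hx]
          exact Finset.prod_congr rfl fun i _ => hsumU' _
      _ = ∑ z : Fˣ, ((∏ i, G (A i)) * (G b * (T ^ b) mc) * ∏ i, e (A i * d + b)) *
              (T ((z : F))) ^ ((∑ i, A i) + b) :=
          Finset.sum_congr rfl fun z _ => by ring
      _ = ((∏ i, G (A i)) * (G b * (T ^ b) mc) * ∏ i, e (A i * d + b)) *
            e ((∑ i, A i) + b) := by
          rw [← Finset.mul_sum, hsumU']
      _ = W (A, b) := rfl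
  -- step 1 : Fourier expansion of the left hand side
  have s1 : ∀ (z : Fˣ) (x : Fin d → Fˣ),
      ((n : ℂ) ^ d * n) * θ ((z : F) * (∑ i, ((x i : F)) ^ d - (d : F) * lam * ∏ i, (x i : F)))
      = (∏ i, ((n : ℂ) * θ ((z : F) * ((x i : F)) ^ d)))
          * ((n : ℂ) * θ (mc * ((z : F) * ∏ i, (x i : F)))) := by
    intro z x
    have harg : (z : F) * (∑ i, ((x i : F)) ^ d - (d : F) * lam * ∏ i, (x i : F))
        = (∑ i, (z : F) * ((x i : F)) ^ d) + mc * ((z : F) * ∏ i, (x i : F)) := by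
      rw [mul_sub, Finset.mul_sum, hmc]
      ring
    rw [harg, AddChar.map_add_eq_mul, θsum]
    rw [Finset.prod_mul_distrib, Finset.prod_const, Finset.card_univ, Fintype.card_fin]
    ring
  have claim1 : ((n : ℂ) ^ d * n) * (∑ z : Fˣ, ∑ x : Fin d → Fˣ,
      θ ((z : F) * (∑ i, ((x i : F)) ^ d - (d : F) * lam * ∏ i, (x i : F))))
      = ∑ Ab ∈ P, ∑ z : Fˣ, ∑ x : Fin d → Fˣ,
          (∏ i, G (Ab.1 i) * (T ^ (Ab.1 i)) ((z : F) * ((x i : F)) ^ d))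
            * (G Ab.2 * (T ^ Ab.2) (mc * ((z : F) * ∏ i, (x i : F)))) := by
    have step : ∀ (z : Fˣ) (x : Fin d → Fˣ),
        ((n : ℂ) ^ d * n) * θ ((z : F) * (∑ i, ((x i : F)) ^ d - (d : F) * lam * ∏ i, (x i : F)))
        = ∑ Ab ∈ P,
            (∏ i, G (Ab.1 i) * (T ^ (Ab.1 i)) ((z : F) * ((x i : F)) ^ d))
              * (G Ab.2 * (T ^ Ab.2) (mc * ((z : F) * ∏ i, (x i : F)))) := by
      intro z x
      rw [s1 z x]
      have hf1 : ∀ i : Fin d, (n : ℂ) * θ ((z : F) * ((x i : F)) ^ d)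
          = ∑ a ∈ range n, G a * (T ^ a) ((z : F) * ((x i : F)) ^ d) :=
        fun i => hfourier _ (mul_ne_zero z.ne_zero (pow_ne_zero _ (x i).ne_zero))
      have hf2 : (n : ℂ) * θ (mc * ((z : F) * ∏ i, (x i : F)))
          = ∑ b ∈ range n, G b * (T ^ b) (mc * ((z : F) * ∏ i, (x i : F))) := by
        refine hfourier _ (mul_ne_zero hmcne (mul_ne_zero z.ne_zero ?_))
        exact Finset.prod_ne_zero_iff.mpr fun i _ => (x i).ne_zero
      rw [Finset.prod_congr rfl fun i _ => hf1 i, hf2]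
      rw [Finset.prod_univ_sum, Finset.sum_mul_sum, ← Finset.sum_product']
    rw [Finset.mul_sum]
    rw [Finset.sum_congr rfl fun z _ => Finset.mul_sum _ _ _]
    rw [Finset.sum_congr rfl fun z _ => Finset.sum_congr rfl fun x _ => step z x]
    rw [Finset.sum_congr rfl fun z _ => Finset.sum_comm]
    exact Finset.sum_comm
  -- step 2 : counting
  have hmemP : ∀ a ∈ range n, ((fun _ : Fin d => a), b₀ a) ∈ P := by
    intro a ha
    rw [hPdef, Finset.mem_product]
    exact ⟨Fintype.mem_piFinset.mpr fun i => ha, Finset.mem_range.mpr (hb₀lt a)⟩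
  have claim2 : (∑ Ab ∈ P, W Ab) = ∑ a ∈ range n, W ((fun _ : Fin d => a), b₀ a) := by
    have hinj : ∀ a ∈ range n, ∀ a' ∈ range n,
        ((fun _ : Fin d => a), b₀ a) = ((fun _ : Fin d => a'), b₀ a') → a = a' := by
      intro a _ a' _ h
      exact congrFun (congrArg Prod.fst h) i₀
    rw [← Finset.sum_image hinj]
    refine (Finset.sum_subset ?_ ?_).symm
    · intro Ab hAb
      rcases Finset.mem_image.mp hAb with ⟨a, ha, rfl⟩
      exact hmemP a ha
    · intro Ab hAbP hAbt
      obtain ⟨A, b⟩ := Ab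
      rw [hPdef, Finset.mem_product] at hAbP
      obtain ⟨hA, hb⟩ := hAbP
      rw [Fintype.mem_piFinset] at hA
      by_cases hall : ∀ i, n ∣ A i * d + b
      · exfalso
        apply hAbt
        have hAc : ∀ j, A j = A i₀ := by
          intro j
          have h1 : A j * d + b ≡ A i₀ * d + b [MOD n] :=
            ((Nat.modEq_zero_iff_dvd).mpr (hall j)).trans
              ((Nat.modEq_zero_iff_dvd).mpr (hall i₀)).symm
          have h2 : A j * d ≡ A i₀ * d [MOD n] := Nat.ModEq.add_right_cancel' _ h1
          have h3 : A j ≡ A i₀ [MOD n] := Nat.ModEq.cancel_right_of_coprime hgcd h2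
          rwa [Nat.ModEq, Nat.mod_eq_of_lt (Finset.mem_range.mp (hA j)),
            Nat.mod_eq_of_lt (Finset.mem_range.mp (hA i₀))] at h3
        have hbb : b = b₀ (A i₀) := hbuniq _ _ (Finset.mem_range.mp hb) (hall i₀)
        refine Finset.mem_image.mpr ⟨A i₀, hA i₀, ?_⟩
        exact Prod.ext (funext fun j => (hAc j).symm) hbb.symm
      · push_neg at hall
        obtain ⟨i, hi⟩ := hall
        have : (∏ i, e (A i * d + b)) = 0 :=
          Finset.prod_eq_zero (Finset.mem_univ i) (by rw [hedef]; simp [hi])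
        rw [hWdef]
        simp only [this, mul_zero, zero_mul]
  -- step 4 : evaluation of the surviving terms
  have claim4 : ∀ a ∈ range n, W ((fun _ : Fin d => a), b₀ a)
      = ((n : ℂ) ^ d * n) *
          (gaussSum ((T ^ a)⁻¹) θ ^ d * gaussSum (T ^ (d * a)) θ * ((T ^ (d * a))⁻¹) mc) := by
    intro a _
    have hTb : T ^ (b₀ a) = (T ^ (d * a))⁻¹ := by
      apply eq_inv_of_mul_eq_one_left
      rw [← pow_add]
      exact hT1 _ (by rw [add_comm, mul_comm]; exact hb₀dvd a)
    have hGb : G (b₀ a) = gaussSum (T ^ (d * a)) θ := by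
      rw [hGdef]
      simp only []
      rw [hTb, inv_inv]
    have hea : e (a * d + b₀ a) = (n : ℂ) := by rw [hedef]; simp [hb₀dvd a]
    have hsum : (∑ _i : Fin d, a) = d * a := by
      rw [Finset.sum_const, Finset.card_univ, Fintype.card_fin, smul_eq_mul]
    have hem : e ((∑ _i : Fin d, a) + b₀ a) = (n : ℂ) := by
      rw [hsum, hedef]
      simp only []
      rw [if_pos (by rw [mul_comm]; exact hb₀dvd a)]
    rw [hWdef]
    simp only []
    rw [hem, hGb, hTb]
    rw [Finset.prod_const, Finset.prod_const, Finset.card_univ, Fintype.card_fin, hea]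
    rw [hGdef]
    ring
  -- conclusion
  have hne : ((n : ℂ) ^ d * n) ≠ 0 :=
    mul_ne_zero (pow_ne_zero _ (Nat.cast_ne_zero.mpr hn0.ne')) (Nat.cast_ne_zero.mpr hn0.ne')
  apply mul_left_cancel₀ hne
  rw [claim1, Finset.sum_congr rfl fun Ab _ => (Prod.mk.eta ▸ claim3 Ab.1 Ab.2 : _), claim2,
    Finset.sum_congr rfl claim4, ← Finset.mul_sum]
  congr 1
  refine Finset.sum_congr rfl fun a _ => ?_
  rw [hmc, neg_mul]
end

section
/- Let p be a prime and d a prime with d ≠ p, and let q = p^r with q ≢ 1 (mod d). Then for every integer a with 1 ≤ a ≤ q−2 and every integer i with 0 ≤ i ≤ r−1, the following identity of integers holds: d·⌊ap^i/(q−1)⌋ + ⌊−dap^i/(q−1)⌋ = (d−1)·⌊ap^i/(q−1)⌋ + Σ_{h=1}^{d-1} ⌊⟨hp^i/d⟩ − ap^i/(q−1)⌋ − 1. -/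
set_option maxHeartbeats 1000000 in
theorem stmt_5 (p d r a i : ℕ) (hp : p.Prime) (hd : d.Prime) (hdp : d ≠ p)
    (hqd : ¬ p ^ r ≡ 1 [MOD d]) (ha1 : 1 ≤ a) (ha2 : a ≤ p ^ r - 2) (hi : i ≤ r - 1) :
    (d : ℤ) * ⌊(a * p ^ i : ℚ) / (p ^ r - 1)⌋ + ⌊(-(d * a * p ^ i) : ℚ) / (p ^ r - 1)⌋ =
      ((d : ℤ) - 1) * ⌊(a * p ^ i : ℚ) / (p ^ r - 1)⌋ +
        (∑ h ∈ Finset.Icc 1 (d - 1),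
          ⌊Int.fract ((h * p ^ i : ℚ) / d) - (a * p ^ i : ℚ) / (p ^ r - 1)⌋) - 1 := by
  have hp2 : 2 ≤ p := hp.two_le
  have hd2 : 2 ≤ d := hd.two_le
  have hq3 : 3 ≤ p ^ r := by
    have := ha1.trans ha2
    omega
  have hr : 1 ≤ r := by
    rcases Nat.eq_zero_or_pos r with h | h
    · subst h; simp at hq3
    · exact h
  have hd0 : (0:ℚ) < (d:ℚ) := by positivity
  have hD : (0:ℚ) < (p:ℚ) ^ r - 1 := by
    have : (3:ℚ) ≤ (p:ℚ) ^ r := by exact_mod_cast hq3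
    linarith
  -- d does not divide q - 1
  have hnd : ¬ d ∣ p ^ r - 1 := by
    intro h
    exact hqd (((Nat.modEq_iff_dvd' (by omega)).2 h).symm)
  -- q - 1 does not divide d * a * p ^ i
  have hnat : ¬ (p ^ r - 1) ∣ (d * a * p ^ i) := by
    intro h
    have hpnd : ¬ p ∣ p ^ r - 1 := by
      intro hpd
      have h1 : p ∣ p ^ r := dvd_pow_self p (by omega : r ≠ 0)
      have h2 : p ∣ p ^ r - (p ^ r - 1) := Nat.dvd_sub h1 hpd
      have h3 : p ^ r - (p ^ r - 1) = 1 := by omega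
      rw [h3] at h2
      have := Nat.le_of_dvd one_pos h2
      omega
    have hcp : (p ^ r - 1).Coprime (p ^ i) :=
      (((Nat.Prime.coprime_iff_not_dvd hp).mpr hpnd).symm).pow_right i
    have hda : (p ^ r - 1) ∣ d * a := hcp.dvd_of_dvd_mul_right h
    obtain ⟨c, hc⟩ := hda
    have hc1 : 1 ≤ c := by
      rcases Nat.eq_zero_or_pos c with h0 | h0
      · rw [h0, Nat.mul_zero] at hc
        have := Nat.mul_pos (show 0 < d by omega) (show 0 < a by omega)
        omega
      · exact h0
    have hdc : ¬ d ∣ c := by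
      intro ⟨e, he⟩
      subst he
      have hae : a = (p ^ r - 1) * e := by
        have hh : d * a = d * ((p ^ r - 1) * e) := by rw [hc]; ring
        exact Nat.eq_of_mul_eq_mul_left (by omega) hh
      have he1 : 1 ≤ e := by
        rcases Nat.eq_zero_or_pos e with h0 | h0
        · subst h0; simp at hae; omega
        · exact h0
      have : p ^ r - 1 ≤ (p ^ r - 1) * e := Nat.le_mul_of_pos_right _ he1
      omega
    have : d ∣ (p ^ r - 1) * c := ⟨a, by omega⟩
    rcases (Nat.Prime.dvd_mul hd).mp this with h' | h'
    · exact hnd h'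
    · exact hdc h'
  -- set up x and its fractional part
  set X : ℚ := (a * p ^ i : ℚ) / ((p:ℚ) ^ r - 1) with hX
  set F : ℚ := Int.fract X with hF
  have hF0 : 0 ≤ F := Int.fract_nonneg X
  have hF1 : F < 1 := Int.fract_lt_one X
  have hXF : X - (⌊X⌋:ℚ) = F := by rw [hF]; exact Int.self_sub_floor X
  -- d * F is never an integer
  have hdF : ∀ m : ℤ, (d:ℚ) * F ≠ m := by
    intro m hm
    have hdX : (d:ℚ) * X = ((m + d * ⌊X⌋ : ℤ) : ℚ) := by
      push_cast
      linear_combination (d:ℚ) * hXF + hm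
    have : ((d * a * p ^ i : ℕ) : ℚ) = ((m + d * ⌊X⌋ : ℤ) : ℚ) * ((p:ℚ) ^ r - 1) := by
      rw [← hdX, hX]
      field_simp
      push_cast
      ring
    have hq1 : ((p ^ r - 1 : ℕ) : ℚ) = (p:ℚ) ^ r - 1 := by
      push_cast [Nat.cast_sub (by omega : 1 ≤ p ^ r)]
      ring
    rw [← hq1] at this
    have hZ : ((d * a * p ^ i : ℕ) : ℤ) = (m + d * ⌊X⌋) * ((p ^ r - 1 : ℕ) : ℤ) := by
      exact_mod_cast this
    have : ((p ^ r - 1 : ℕ) : ℤ) ∣ ((d * a * p ^ i : ℕ) : ℤ) :=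
      ⟨m + (d:ℤ) * ⌊X⌋, by linarith [hZ]⟩
    exact hnat (Int.natCast_dvd_natCast.mp this)
  set B : ℤ := ⌊(d:ℚ) * F⌋ with hB
  have hBl : 0 ≤ B := Int.floor_nonneg.mpr (by positivity)
  have hBu : B ≤ (d:ℤ) - 1 := by
    have h1 : (d:ℚ) * F < d := by nlinarith
    have h2 : (B:ℚ) < (d:ℚ) := lt_of_le_of_lt (Int.floor_le _) h1
    have : B < (d:ℤ) := by exact_mod_cast h2
    omega
  have hBlt : (B : ℚ) < (d:ℚ) * F := by
    rcases lt_or_eq_of_le (Int.floor_le ((d:ℚ) * F)) with h | h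
    · exact h
    · exact absurd h.symm (hdF B)
  have hBup : (d:ℚ) * F < B + 1 := Int.lt_floor_add_one _
  -- individual floor computation
  have hterm : ∀ k ∈ Finset.Icc 1 (d - 1),
      ⌊(k:ℚ) / d - X⌋ = -⌊X⌋ - (if (k:ℤ) ≤ B then 1 else 0) := by
    intro k hk
    simp only [Finset.mem_Icc] at hk
    have hkd : (k:ℚ) < d := by
      have : k < d := by omega
      exact_mod_cast this
    have hk1 : (1:ℚ) ≤ k := by exact_mod_cast hk.1
    have hsplit : (k:ℚ) / d - X = ((k:ℚ) / d - F) + ((-⌊X⌋ : ℤ) : ℚ) := by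
      push_cast; linear_combination -hXF
    rw [hsplit, Int.floor_add_intCast]
    by_cases hc : (k:ℤ) ≤ B
    · have : (k:ℚ) ≤ B := by exact_mod_cast hc
      have hlt : (k:ℚ) < d * F := lt_of_le_of_lt this hBlt
      have : ⌊(k:ℚ) / d - F⌋ = -1 := by
        rw [Int.floor_eq_iff]
        constructor
        · push_cast
          have : (0:ℚ) < (k:ℚ) / d := by positivity
          nlinarith
        · push_cast
          have hfd : (k:ℚ) / d < F := by rw [div_lt_iff₀ hd0]; nlinarith
          linarith
      rw [this, if_pos hc]; ring
    · have hc' : B + 1 ≤ (k:ℤ) := by omega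
      have : ((B:ℚ) + 1) ≤ (k:ℚ) := by exact_mod_cast hc'
      have hge : d * F < (k:ℚ) := lt_of_lt_of_le hBup this
      have : ⌊(k:ℚ) / d - F⌋ = 0 := by
        rw [Int.floor_eq_iff]
        constructor
        · push_cast
          rw [sub_nonneg, le_div_iff₀ hd0]
          nlinarith
        · push_cast
          have : (k:ℚ) / d < 1 := (div_lt_one hd0).mpr hkd
          nlinarith
      rw [this, if_neg hc]; ring
  -- the sum over k of the normalized terms
  have hcard : (Finset.Icc 1 (d - 1)).card = d - 1 := by
    rw [Nat.card_Icc]; omega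
  have hsum_k : ∑ k ∈ Finset.Icc 1 (d - 1), ⌊(k:ℚ) / d - X⌋
      = -((d:ℤ) - 1) * ⌊X⌋ - B := by
    rw [Finset.sum_congr rfl hterm]
    rw [Finset.sum_sub_distrib, Finset.sum_const, hcard]
    have hfilter : ∑ k ∈ Finset.Icc 1 (d - 1), (if (k:ℤ) ≤ B then (1:ℤ) else 0)
        = B := by
      rw [Finset.sum_boole]
      have : Finset.filter (fun k : ℕ => (k:ℤ) ≤ B) ((Finset.Icc 1 (d - 1) : Finset ℕ))
          = (Finset.Icc 1 B.toNat : Finset ℕ) := by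
        ext k
        simp only [Finset.mem_filter, Finset.mem_Icc]
        omega
      rw [this]
      simp [Nat.card_Icc]
      omega
    rw [hfilter, nsmul_eq_mul]
    have h1 : ((d - 1 : ℕ) : ℤ) = (d:ℤ) - 1 := by omega
    rw [h1]
    ring
  -- the bijection h ↦ h * p^i % d
  have hcop : Nat.Coprime d (p ^ i) := ((Nat.coprime_primes hd hp).mpr hdp).pow_right i
  have himg : (Finset.Icc 1 (d - 1)).image (fun h => h * p ^ i % d) = Finset.Icc 1 (d - 1) := by
    have hsub : (Finset.Icc 1 (d - 1)).image (fun h => h * p ^ i % d) ⊆ Finset.Icc 1 (d - 1) := by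
      intro k hk
      simp only [Finset.mem_image, Finset.mem_Icc] at hk ⊢
      obtain ⟨h, ⟨hh1, hh2⟩, hhk⟩ := hk
      have hlt : h * p ^ i % d < d := Nat.mod_lt _ (by omega)
      have hne : h * p ^ i % d ≠ 0 := by
        intro h0
        have : d ∣ h * p ^ i := Nat.dvd_of_mod_eq_zero h0
        rcases (Nat.Prime.dvd_mul hd).mp this with h' | h'
        · have := Nat.le_of_dvd (by omega) h'; omega
        · exact absurd h' ((Nat.Prime.coprime_iff_not_dvd hd).mp hcop)
      omega
    have hinj : Set.InjOn (fun h => h * p ^ i % d) (Finset.Icc 1 (d - 1)) := by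
      intro x hx y hy hxy
      simp only [Finset.coe_Icc, Set.mem_Icc] at hx hy
      have : x * p ^ i ≡ y * p ^ i [MOD d] := by
        unfold Nat.ModEq
        exact hxy
      have hxyd : x ≡ y [MOD d] := this.cancel_right_of_coprime hcop
      have : x % d = y % d := hxyd
      rw [Nat.mod_eq_of_lt (by omega), Nat.mod_eq_of_lt (by omega)] at this
      exact this
    apply Finset.eq_of_subset_of_card_le hsub
    rw [Finset.card_image_of_injOn hinj]
  have hfract : ∀ h : ℕ, Int.fract ((h * p ^ i : ℚ) / d) = ((h * p ^ i % d : ℕ) : ℚ) / d := by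
    intro h
    have : ((h : ℚ) * (p:ℚ) ^ i) = ((h * p ^ i : ℕ) : ℚ) := by push_cast; ring
    rw [this, Int.fract_div_natCast_eq_div_natCast_mod]
  have hsum_eq : ∑ h ∈ Finset.Icc 1 (d - 1), ⌊Int.fract ((h * p ^ i : ℚ) / d) - X⌋
      = ∑ k ∈ Finset.Icc 1 (d - 1), ⌊(k:ℚ) / d - X⌋ := by
    conv_rhs => rw [← himg]
    rw [Finset.sum_image (by
      intro x hx y hy hxy
      have hinj : Set.InjOn (fun h => h * p ^ i % d) (Finset.Icc 1 (d - 1)) := by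
        intro x hx y hy hxy
        simp only [Finset.coe_Icc, Set.mem_Icc] at hx hy
        have : x * p ^ i ≡ y * p ^ i [MOD d] := hxy
        have hxyd : x ≡ y [MOD d] := this.cancel_right_of_coprime hcop
        have : x % d = y % d := hxyd
        rw [Nat.mod_eq_of_lt (by omega), Nat.mod_eq_of_lt (by omega)] at this
        exact this
      exact hinj (Finset.mem_coe.mpr hx) (Finset.mem_coe.mpr hy) hxy)]
    apply Finset.sum_congr rfl
    intro h hh
    rw [hfract h]
  -- left side: floor of the negative
  have hneg : ⌊(-(d * a * p ^ i) : ℚ) / ((p:ℚ) ^ r - 1)⌋ = -B - 1 - d * ⌊X⌋ := by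
    have heq : (-(d * a * p ^ i) : ℚ) / ((p:ℚ) ^ r - 1)
        = -((d:ℚ) * F) + ((-(d:ℤ) * ⌊X⌋ : ℤ) : ℚ) := by
      have : (-(d * a * p ^ i) : ℚ) / ((p:ℚ) ^ r - 1) = -((d:ℚ) * X) := by
        rw [hX]; ring
      rw [this]
      push_cast
      linear_combination -(d:ℚ) * hXF
    rw [heq, Int.floor_add_intCast]
    have : ⌊-((d:ℚ) * F)⌋ = -B - 1 := by
      rw [Int.floor_eq_iff]
      constructor
      · push_cast; nlinarith
      · push_cast; nlinarith
    rw [this]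
    ring
  -- put everything together
  rw [hsum_eq, hsum_k, hneg]
  ring
end
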